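/- Let n₀ ∈ ℕ, σ ∈ 2^ℕ, and (F_k)_{k≥1} be a sequence with (F_k,σ) ∈ 𝒢ₛ_{n₀} for all k, satisfying: the F_k are pairwise disjoint, and max(F_k,σ) < min(F_{k+1},σ) for all k. Then for every n ∈ ℕ and every nonempty G ∈ S_n, the pair (∪_{k∈G} F_k, σ) belongs to 𝒢ₛ_{n₀+n}, with min(∪_{k∈G} F_k, σ) = min(F_{min G},σ) and max(∪_{k∈G} F_k, σ) = max(F_{max G},σ). -/

import Mathlib

abbrev Cantor : Type := ℕ → Bool

/- `wedgeLen σ τ` is the length `|σ∧τ| ∈ ℕ∞` of the longest common initial segment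
of `σ` and `τ` (`⊤` if `σ = τ`).  Since wedges `σ∧τ`, `σ∧τ'` of a common sequence are
initial segments of that sequence, comparisons `⊑`, `⊏`, `=` between such wedges are
equivalent to `≤`, `<`, `=` between their lengths. -/
open Classical in
noncomputable def wedgeLen (σ τ : Cantor) : ℕ∞ :=
  if h : σ = τ then ⊤ else ((Nat.find (Function.ne_iff.mp h) : ℕ) : ℕ∞)

/-- `GS n F σ m M` : the pair `(F,σ)` belongs to `𝒢ₛ_n` via a derivation attaching the
values `min(F,σ) = m` and `max(F,σ) = M`. -/
inductive GS : ℕ → Finset Cantor → Cantor → ℕ∞ → ℕ∞ → Prop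
  | base (d : ℕ) (τ : Fin (d + 1) → Cantor) (σ : Cantor) (F : Finset Cantor)
      (h1 : ∀ i, σ ≠ τ i)
      (h2 : 0 < wedgeLen σ (τ 0))
      (h3 : ∀ i j : Fin (d + 1), i < j → wedgeLen σ (τ i) < wedgeLen σ (τ j))
      (h4 : ((d + 1 : ℕ) : ℕ∞) ≤ wedgeLen σ (τ 0))
      (hF : ∀ x, x ∈ F ↔ ∃ i, x = τ i) :
      GS 1 F σ (wedgeLen σ (τ 0)) (wedgeLen σ (τ (Fin.last d)))
  | up (n : ℕ) (F : Finset Cantor) (σ : Cantor) (m M : ℕ∞) :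
      GS n F σ m M → GS (n + 1) F σ m M
  | skipped (n : ℕ) (d : ℕ) (Fs : Fin (d + 1) → Finset Cantor)
      (σs : Fin (d + 1) → Cantor) (mins maxs : Fin (d + 1) → ℕ∞)
      (σ : Cantor) (F : Finset Cantor)
      (hGS : ∀ i, GS n (Fs i) (σs i) (mins i) (maxs i))
      (hdisj : ∀ i j : Fin (d + 1), i ≠ j → ∀ x, x ∈ Fs i → x ∉ Fs j)
      (hne : ∀ i, σ ≠ σs i)
      (h0 : 0 < wedgeLen σ (σs 0))
      (hmono : ∀ i j : Fin (d + 1), i < j → wedgeLen σ (σs i) < wedgeLen σ (σs j))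
      (hlt : ∀ i, wedgeLen σ (σs i) < mins i)
      (hd : ((d + 1 : ℕ) : ℕ∞) ≤ wedgeLen σ (σs 0))
      (hF : ∀ x, x ∈ F ↔ ∃ i, x ∈ Fs i) :
      GS (n + 1) F σ (wedgeLen σ (σs 0)) (wedgeLen σ (σs (Fin.last d)))
  | attached (n : ℕ) (d : ℕ) (Fs : Fin (d + 1) → Finset Cantor)
      (mins maxs : Fin (d + 1) → ℕ∞) (σ : Cantor) (F : Finset Cantor)
      (hGS : ∀ i, GS n (Fs i) σ (mins i) (maxs i))
      (hdisj : ∀ i j : Fin (d + 1), i ≠ j → ∀ x, x ∈ Fs i → x ∉ Fs j)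
      (hord : ∀ i : Fin d, maxs i.castSucc < mins i.succ)
      (hd : ((d + 1 : ℕ) : ℕ∞) ≤ mins 0)
      (hF : ∀ x, x ∈ F ↔ ∃ i, x ∈ Fs i) :
      GS (n + 1) F σ (mins 0) (maxs (Fin.last d))

/-- The Schreier families `S_n` (for `n ≥ 1`; the value at `0` is a dummy). -/
def Schreier : ℕ → Set (Finset ℕ)
  | 0 => {∅}
  | 1 => {F | ∀ k ∈ F, F.card ≤ k}
  | (n + 2) => {F | F = ∅ ∨ ∃ d : ℕ, ∃ Fs : Fin (d + 1) → Finset ℕ,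
      (∀ i, Fs i ∈ Schreier (n + 1) ∧ (Fs i).Nonempty) ∧
      (∀ i : Fin d, ∀ a ∈ Fs i.castSucc, ∀ b ∈ Fs i.succ, a < b) ∧
      (∀ k ∈ Fs 0, d + 1 ≤ k) ∧
      (∀ x, x ∈ F ↔ ∃ i, x ∈ Fs i)}

/-! Induction on `n`. A nonempty `G ∈ S_{n+1}` is a union of blocks `G_0 < ⋯ < G_d` with
`d + 1 ≤ min G_0`: singletons when `n = 0`, nonempty members of `S_n` otherwise. The unions
`⋃_{k ∈ G_i} F_k` lie in `𝒢ₛ_{n₀+n}` (by hypothesis, resp. by induction) and form an attached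
branching of `σ`. Its length condition holds because `min(F_k,σ) ≤ max(F_k,σ) < min(F_{k+1},σ)`
makes `k ↦ min(F_k,σ)` strictly increasing from `min(F_1,σ) ≥ 1`, so
`d + 1 ≤ min G_0 ≤ min(F_{min G_0},σ)`. -/

section Interlaced

variable {α : Type*} [Preorder α]

theorem Fin.strictMono_of_interlaced {d : ℕ} {m M : Fin (d + 1) → α}
    (hle : ∀ i, m i ≤ M i) (hlt : ∀ i : Fin d, M i.castSucc < m i.succ) : StrictMono M :=
  Fin.strictMono_iff_lt_succ.2 fun i => (hlt i).trans_le (hle i.succ)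

theorem Fin.lt_of_interlaced {d : ℕ} {m M : Fin (d + 1) → α}
    (hle : ∀ i, m i ≤ M i) (hlt : ∀ i : Fin d, M i.castSucc < m i.succ) {i j : Fin (d + 1)}
    (hij : i < j) : M i < m j := by
  obtain ⟨k, rfl⟩ := Fin.exists_succ_eq.2 ((Fin.zero_le i).trans_lt hij).ne'
  exact ((Fin.strictMono_of_interlaced hle hlt).monotone (Fin.le_castSucc_iff.2 hij)).trans_lt
    (hlt k)

theorem Nat.lt_of_interlaced {m M : ℕ → α} (hle : ∀ k, m k ≤ M k)
    (hlt : ∀ k, M k < m (k + 1)) {i j : ℕ} (hij : i < j) : M i < m j := by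
  obtain ⟨k, rfl⟩ := Nat.exists_eq_add_of_lt hij
  have hM : StrictMono M := strictMono_nat_of_lt_succ fun k => (hlt k).trans_le (hle _)
  exact (hM.monotone (Nat.le_add_right i k)).trans_lt (hlt _)

end Interlaced

theorem ENat.add_le_of_strictMono {m : ℕ → ℕ∞} (hm : StrictMono m) (k : ℕ) :
    k + m 0 ≤ m k := by
  induction k with
  | zero => simp
  | succ k ih =>
    calc ((k + 1 : ℕ) : ℕ∞) + m 0 = (k + m 0) + 1 := by push_cast; ring
      _ ≤ m k + 1 := by gcongr
      _ ≤ m (k + 1) := Order.add_one_le_of_lt (hm k.lt_succ_self)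

section Blocks

variable {α : Type*} [LinearOrder α] {d : ℕ} {Gs : Fin (d + 1) → Finset α}

theorem Finset.lt_of_mem_of_mem_blocks (hne : ∀ i, (Gs i).Nonempty)
    (hsep : ∀ i : Fin d, ∀ a ∈ Gs i.castSucc, ∀ b ∈ Gs i.succ, a < b)
    {i j : Fin (d + 1)} (hij : i < j) {a b : α} (ha : a ∈ Gs i) (hb : b ∈ Gs j) : a < b :=
  calc a ≤ (Gs i).max' (hne i) := le_max' _ _ ha
    _ < (Gs j).min' (hne j) :=
      Fin.lt_of_interlaced (m := fun i => (Gs i).min' (hne i)) (fun i => min'_le_max' _ (hne i))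
        (fun i => hsep i _ (max'_mem _ _) _ (min'_mem _ _)) hij
    _ ≤ b := min'_le _ _ hb

variable {G : Finset α} (hne : ∀ i, (Gs i).Nonempty)
  (hsep : ∀ i : Fin d, ∀ a ∈ Gs i.castSucc, ∀ b ∈ Gs i.succ, a < b)
  (hGs : ∀ x, x ∈ G ↔ ∃ i, x ∈ Gs i)
include hne hsep hGs

theorem Finset.min'_eq_of_blocks (hG : G.Nonempty) : G.min' hG = (Gs 0).min' (hne 0) := by
  refine le_antisymm (min'_le _ _ ((hGs _).2 ⟨0, min'_mem _ _⟩)) (le_min' _ _ _ fun y hy => ?_)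
  obtain ⟨i, hi⟩ := (hGs y).1 hy
  rcases (Fin.zero_le i).eq_or_lt with rfl | h
  · exact min'_le _ _ hi
  · exact (lt_of_mem_of_mem_blocks hne hsep h (min'_mem _ _) hi).le

theorem Finset.max'_eq_of_blocks (hG : G.Nonempty) :
    G.max' hG = (Gs (Fin.last d)).max' (hne _) := by
  refine le_antisymm (max'_le _ _ _ fun y hy => ?_) (le_max' _ _ ((hGs _).2 ⟨_, max'_mem _ _⟩))
  obtain ⟨i, hi⟩ := (hGs y).1 hy
  rcases (Fin.le_last i).eq_or_lt with rfl | h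
  · exact le_max' _ _ hi
  · exact (lt_of_mem_of_mem_blocks hne hsep h hi (max'_mem _ _)).le

end Blocks

namespace GS

variable {n : ℕ} {F : Finset Cantor} {σ : Cantor} {m M : ℕ∞}

theorem one_le_min (h : GS n F σ m M) : 1 ≤ m := by
  induction h with
  | up _ _ _ _ _ _ ih => exact ih
  | base d _ _ _ _ _ _ hd _ | skipped _ d _ _ _ _ _ _ _ _ _ _ _ _ hd _ _
  | attached _ d _ _ _ _ _ _ _ _ hd _ _ =>
    exact le_trans (by exact_mod_cast d.succ_pos) hd

theorem min_le_max (h : GS n F σ m M) : m ≤ M := by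
  induction h with
  | base d τ σ _ _ _ hτ _ _ =>
    exact (show StrictMono fun i => wedgeLen σ (τ i) from hτ).monotone (Fin.zero_le _)
  | up _ _ _ _ _ _ ih => exact ih
  | skipped _ d _ σs _ _ σ _ _ _ _ _ hσs _ _ _ _ =>
    exact (show StrictMono fun i => wedgeLen σ (σs i) from hσs).monotone (Fin.zero_le _)
  | attached _ _ _ _ _ _ _ _ _ hord _ _ ih =>
    exact (ih 0).trans ((Fin.strictMono_of_interlaced ih hord).monotone (Fin.zero_le _))

end GS

theorem one_le_of_mem_Schreier : ∀ n : ℕ, ∀ G ∈ Schreier (n + 1), ∀ k ∈ G, 1 ≤ k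
  | 0, G, hG, k, hk => (Finset.card_pos.2 ⟨k, hk⟩).trans_le (hG k hk)
  | n + 1, G, hG, k, hk => by
    rcases hG with rfl | ⟨d, Gs, hGs, -, -, hmem⟩
    · simp at hk
    · obtain ⟨i, hi⟩ := (hmem k).1 hk
      exact one_le_of_mem_Schreier n (Gs i) (hGs i).1 k hi

structure GSAttachedSeq (n₀ : ℕ) (σ : Cantor) (Fk : ℕ → Finset Cantor) (mins maxs : ℕ → ℕ∞) :
    Prop where
  gs : ∀ k, 1 ≤ k → GS n₀ (Fk k) σ (mins k) (maxs k)
  disjoint : ∀ k l, 1 ≤ k → 1 ≤ l → k ≠ l → ∀ x, x ∈ Fk k → x ∉ Fk l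
  max_lt_min_succ : ∀ k, 1 ≤ k → maxs k < mins (k + 1)

namespace GSAttachedSeq

variable {n₀ : ℕ} {σ : Cantor} {Fk : ℕ → Finset Cantor} {mins maxs : ℕ → ℕ∞}
  (hF : GSAttachedSeq n₀ σ Fk mins maxs)
include hF

theorem strictMono_mins_succ : StrictMono fun k => mins (k + 1) :=
  strictMono_nat_of_lt_succ fun k =>
    (hF.gs (k + 1) k.succ_pos).min_le_max.trans_lt (hF.max_lt_min_succ (k + 1) k.succ_pos)

theorem max_lt_min {a b : ℕ} (ha : 1 ≤ a) (hab : a < b) : maxs a < mins b := by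
  obtain ⟨a, rfl⟩ : ∃ a', a = a' + 1 := ⟨a - 1, by omega⟩
  obtain ⟨b, rfl⟩ : ∃ b', b = b' + 1 := ⟨b - 1, by omega⟩
  exact Nat.lt_of_interlaced (m := fun k => mins (k + 1)) (M := fun k => maxs (k + 1))
    (fun k => (hF.gs (k + 1) k.succ_pos).min_le_max)
    (fun k => hF.max_lt_min_succ (k + 1) k.succ_pos) (by omega)

theorem le_min {k : ℕ} (hk : 1 ≤ k) : (k : ℕ∞) ≤ mins k := by
  obtain ⟨k, rfl⟩ : ∃ k', k = k' + 1 := ⟨k - 1, by omega⟩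
  calc ((k + 1 : ℕ) : ℕ∞) ≤ k + mins 1 := by
        push_cast; gcongr; exact (hF.gs 1 le_rfl).one_le_min
    _ ≤ mins (k + 1) := ENat.add_le_of_strictMono hF.strictMono_mins_succ k

open scoped Classical in
theorem GS_biUnion_of_blocks {N d : ℕ} {Gs : Fin (d + 1) → Finset ℕ} {G : Finset ℕ}
    (hne : ∀ i, (Gs i).Nonempty) (hpos : ∀ i, ∀ k ∈ Gs i, 1 ≤ k)
    (hsep : ∀ i : Fin d, ∀ a ∈ Gs i.castSucc, ∀ b ∈ Gs i.succ, a < b)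
    (hd : ∀ k ∈ Gs 0, d + 1 ≤ k) (hGs : ∀ x, x ∈ G ↔ ∃ i, x ∈ Gs i)
    (hblock : ∀ i, GS N ((Gs i).biUnion Fk) σ (mins ((Gs i).min' (hne i)))
      (maxs ((Gs i).max' (hne i))))
    (hG : G.Nonempty) :
    GS (N + 1) (G.biUnion Fk) σ (mins (G.min' hG)) (maxs (G.max' hG)) := by
  rw [Finset.min'_eq_of_blocks hne hsep hGs, Finset.max'_eq_of_blocks hne hsep hGs]
  refine GS.attached N d _ _ _ σ _ hblock ?_ ?_ ?_ ?_
  · intro i j hij x hxi hxj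
    obtain ⟨k, hk, hxk⟩ := Finset.mem_biUnion.1 hxi
    obtain ⟨l, hl, hxl⟩ := Finset.mem_biUnion.1 hxj
    refine hF.disjoint k l (hpos i k hk) (hpos j l hl) ?_ x hxk hxl
    rintro rfl
    rcases hij.lt_or_gt with h | h
    · exact (Finset.lt_of_mem_of_mem_blocks hne hsep h hk hl).false
    · exact (Finset.lt_of_mem_of_mem_blocks hne hsep h hl hk).false
  · exact fun i => hF.max_lt_min (hpos _ _ (Finset.max'_mem _ _))
      (hsep i _ (Finset.max'_mem _ _) _ (Finset.min'_mem _ _))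
  · calc ((d + 1 : ℕ) : ℕ∞) ≤ ((Gs 0).min' (hne 0) : ℕ) := by
          exact_mod_cast hd _ (Finset.min'_mem _ _)
      _ ≤ _ := hF.le_min (hpos _ _ (Finset.min'_mem _ _))
  · simp only [Finset.mem_biUnion, hGs]
    exact fun x => ⟨fun ⟨k, ⟨i, hk⟩, hx⟩ => ⟨i, k, hk, hx⟩, fun ⟨i, k, hk, hx⟩ => ⟨k, ⟨i, hk⟩, hx⟩⟩

open scoped Classical in
theorem GS_biUnion_of_mem_Schreier (n : ℕ) :
    ∀ G ∈ Schreier (n + 1), ∀ hG : G.Nonempty,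
      GS (n₀ + (n + 1)) (G.biUnion Fk) σ (mins (G.min' hG)) (maxs (G.max' hG)) := by
  induction n with
  | zero =>
    intro G hS hG
    have hcard : G.card = (G.card - 1) + 1 := (Nat.sub_add_cancel hG.card_pos).symm
    set g := G.orderEmbOfFin hcard
    refine hF.GS_biUnion_of_blocks (Gs := fun i => {g i}) (fun _ => Finset.singleton_nonempty _)
      ?_ ?_ ?_ ?_ (fun i => ?_) hG
    · simp only [Finset.mem_singleton, forall_eq]
      exact fun i => one_le_of_mem_Schreier 0 G hS _ (G.orderEmbOfFin_mem hcard i)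
    · simp only [Finset.mem_singleton, forall_eq]
      exact fun i => g.strictMono Fin.castSucc_lt_succ
    · simp only [Finset.mem_singleton, forall_eq, ← hcard]
      exact hS _ (G.orderEmbOfFin_mem hcard 0)
    · intro x
      rw [← Finset.mem_coe, ← G.range_orderEmbOfFin hcard]
      simp only [Set.mem_range, Finset.mem_singleton, eq_comm, g]
    · simp only [Finset.singleton_biUnion, Finset.min'_singleton, Finset.max'_singleton]
      exact hF.gs _ (one_le_of_mem_Schreier 0 G hS _ (G.orderEmbOfFin_mem hcard i))
  | succ n ih =>
    intro G hS hG
    rcases hS with rfl | ⟨d, Gs, hGs, hsep, hd, hmem⟩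
    · simp at hG
    exact hF.GS_biUnion_of_blocks (fun i => (hGs i).2)
      (fun i => one_le_of_mem_Schreier n (Gs i) (hGs i).1) hsep hd hmem
      (fun i => ih (Gs i) (hGs i).1 (hGs i).2) hG

end GSAttachedSeq

theorem GS_attached_schreier_union_general (n₀ : ℕ) (σ : Cantor)
    (Fk : ℕ → Finset Cantor) (mins maxs : ℕ → ℕ∞)
    (hGS : ∀ k, 1 ≤ k → GS n₀ (Fk k) σ (mins k) (maxs k))
    (hdisj : ∀ k l, 1 ≤ k → 1 ≤ l → k ≠ l → ∀ x, x ∈ Fk k → x ∉ Fk l)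
    (hord : ∀ k, 1 ≤ k → maxs k < mins (k + 1)) :
    ∀ n : ℕ, 1 ≤ n → ∀ G ∈ Schreier n, ∀ hG : G.Nonempty,
      ∀ U : Finset Cantor, (∀ x, x ∈ U ↔ ∃ k ∈ G, x ∈ Fk k) →
        GS (n₀ + n) U σ (mins (G.min' hG)) (maxs (G.max' hG)) := by
  classical
  intro n hn G hS hG U hU
  obtain ⟨n, rfl⟩ : ∃ n', n = n' + 1 := ⟨n - 1, by omega⟩
  obtain rfl : U = G.biUnion Fk := by
    ext x
    simp only [hU, Finset.mem_biUnion]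
  exact GSAttachedSeq.GS_biUnion_of_mem_Schreier ⟨hGS, hdisj, hord⟩ n G hS hG

theorem GS_attached_schreier_union (n₀ : ℕ) (hn₀ : 1 ≤ n₀) (σ : Cantor)
    (Fk : ℕ → Finset Cantor) (mins maxs : ℕ → ℕ∞)
    (hGS : ∀ k, 1 ≤ k → GS n₀ (Fk k) σ (mins k) (maxs k))
    (hdisj : ∀ k l, 1 ≤ k → 1 ≤ l → k ≠ l → ∀ x, x ∈ Fk k → x ∉ Fk l)
    (hord : ∀ k, 1 ≤ k → maxs k < mins (k + 1)) :
    ∀ n : ℕ, 1 ≤ n → ∀ G ∈ Schreier n, ∀ hG : G.Nonempty,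
      ∀ U : Finset Cantor, (∀ x, x ∈ U ↔ ∃ k ∈ G, x ∈ Fk k) →
        GS (n₀ + n) U σ (mins (G.min' hG)) (maxs (G.max' hG)) :=
  GS_attached_schreier_union_general n₀ σ Fk mins maxs hGS hdisj hord
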